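/- Let G be a just infinite group that is not virtually abelian. Then G is hereditarily just infinite if and only if every maximal subgroup of G of finite index is just infinite. -/

import Mathlib

def ResiduallyFinite (G : Type*) [Group G] : Prop :=
  sInf {N : Subgroup G | N.Normal ∧ N.FiniteIndex} = ⊥

def JustInfinite (G : Type*) [Group G] : Prop :=
  Infinite G ∧ ResiduallyFinite G ∧
    ∀ N : Subgroup G, N.Normal → N ≠ ⊥ → N.FiniteIndex

def FinRadical (G : Type*) [Group G] : Set G :=
  { x | ∃ N : Subgroup G, N.Normal ∧ (N : Set G).Finite ∧ x ∈ N }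

def VirtuallyAbelian (G : Type*) [Group G] : Prop :=
  ∃ H : Subgroup G, H.FiniteIndex ∧ ∀ a b : H, a * b = b * a

def conjugatesSet (G : Type*) [Group G] (B : Subgroup G) : Set (Subgroup G) :=
  { C | ∃ g : G, B.map (MulAut.conj g).toMonoidHom = C }

def IsBasal (G : Type*) [Group G] (B : Subgroup G) : Prop :=
  B ≠ ⊥ ∧ (conjugatesSet G B).Finite ∧
  (∀ C ∈ conjugatesSet G B, ∀ D ∈ conjugatesSet G B, C ≠ D →
      C ⊓ D = ⊥ ∧ ∀ x ∈ C, ∀ y ∈ D, Commute x y) ∧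
  iSupIndep (fun C : conjugatesSet G B => (C : Subgroup G)) ∧
  (⨆ C ∈ conjugatesSet G B, C) = Subgroup.normalClosure (B : Set G)

/-!
Let `K` have finite index and let `P ◁ K` be nontrivial; put `H = core K`. A nontrivial subgroup
whose centralizer has finite index forces `G` to be virtually abelian, so `P ∩ H ≠ 1` (otherwise
`H` would centralize `P`). A minimal nontrivial intersection `B` of `G`-conjugates of `P ∩ H` is
normalized by `H`, and any two of its conjugates are equal or meet trivially. If `P` had infinite
index, the normalizer of `B` would be a proper subgroup of finite index, hence contained in a
maximal subgroup `M` of finite index. For `g ∉ M` the conjugate `B^g` meets every `M`-conjugate of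
`B` trivially; these subgroups lie in `H` and are normalized by `H`, so they commute with `B^g`.
Thus the normal closure of `B` in `M`, which has finite index because `M` is just infinite,
centralizes `B^g`: `G` is virtually abelian.
-/

open Subgroup MulAction ConjAct Pointwise

lemma ResiduallyFinite.subgroup {G : Type*} [Group G] (hG : ResiduallyFinite G)
    (K : Subgroup G) : ResiduallyFinite K := by
  refine eq_bot_iff.mpr fun x hx => mem_bot.mpr (Subtype.ext ?_)
  have hxG : (x : G) ∈ sInf {N : Subgroup G | N.Normal ∧ N.FiniteIndex} :=
    mem_sInf.mpr fun N ⟨hN, _⟩ =>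
      mem_subgroupOf.mp (mem_sInf.mp hx _ ⟨hN.subgroupOf K, inferInstance⟩)
  rwa [hG, mem_bot] at hxG

namespace Subgroup

variable {G : Type*} [Group G]

lemma infinite_of_finiteIndex [Infinite G] (K : Subgroup G) [K.FiniteIndex] : Infinite K := by
  by_contra h
  have := not_infinite_iff_finite.mp h
  have := (finite_iff_finite_and_finiteIndex K).mpr ⟨this, ‹_›⟩
  exact not_finite G

lemma ne_bot_of_finiteIndex [Infinite G] (K : Subgroup G) [K.FiniteIndex] : K ≠ ⊥ := by
  have := K.infinite_of_finiteIndex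
  rintro rfl
  exact not_finite (⊥ : Subgroup G)

lemma finiteIndex_of_finiteIndex_subgroupOf {H K : Subgroup G} [K.FiniteIndex]
    [(H.subgroupOf K).FiniteIndex] : H.FiniteIndex := by
  have : (H ⊓ K).FiniteIndex := by
    rw [finiteIndex_iff, ← relIndex_mul_index inf_le_right, inf_relIndex_right]
    exact mul_ne_zero (H.subgroupOf K).index_ne_zero_of_finite FiniteIndex.index_ne_zero
  exact finiteIndex_of_le (H := H ⊓ K) inf_le_left

lemma exists_le_isCoatom_of_finiteIndex {N : Subgroup G} [N.FiniteIndex] (hN : N ≠ ⊤) :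
    ∃ M, N ≤ M ∧ IsCoatom M := by
  obtain ⟨M, ⟨hNM, hM⟩, hmin⟩ :=
    (measure Subgroup.index).wf.has_min {T | N ≤ T ∧ T ≠ ⊤} ⟨N, le_rfl, hN⟩
  have : M.FiniteIndex := finiteIndex_of_le hNM
  exact ⟨M, hNM, hM, fun T hMT => by_contra fun hT =>
    hmin T ⟨hNM.trans hMT.le, hT⟩ (index_strictAnti hMT)⟩

lemma le_centralizer_of_inf_eq_bot {A B : Subgroup G}
    (hA : A ≤ normalizer (B : Set G)) (hB : B ≤ normalizer (A : Set G)) (h : A ⊓ B = ⊥) :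
    A ≤ centralizer (B : Set G) := by
  intro a ha
  rw [mem_centralizer_iff]
  intro b hb
  have hA' : b * a * b⁻¹ * a⁻¹ ∈ A :=
    mul_mem ((mem_normalizer_iff.mp (hB hb) a).mp ha) (inv_mem ha)
  have hB' : b * a * b⁻¹ * a⁻¹ ∈ B := by
    rw [show b * a * b⁻¹ * a⁻¹ = b * (a * b⁻¹ * a⁻¹) by group]
    exact mul_mem hb ((mem_normalizer_iff.mp (hA ha) _).mp (inv_mem hb))
  have hcomm : b * a * b⁻¹ * a⁻¹ = 1 := by simpa [h] using mem_inf.mpr ⟨hA', hB'⟩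
  rwa [mul_inv_eq_one, mul_inv_eq_iff_eq_mul] at hcomm

lemma le_normalizer_sInf {H : Subgroup G} {S : Set (Subgroup G)}
    (h : ∀ T ∈ S, H ≤ normalizer (T : Set G)) :
    H ≤ normalizer ((sInf S : Subgroup G) : Set G) := by
  intro x hx
  rw [mem_normalizer_iff]
  intro y
  simp only [mem_sInf]
  exact forall₂_congr fun T hT => mem_normalizer_iff.mp (h T hT hx) y

lemma Normal.le_normalizer_smul {H Q : Subgroup G} (hH : H.Normal)
    (hHQ : H ≤ normalizer (Q : Set G)) (g : ConjAct G) :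
    H ≤ normalizer ((g • Q : Subgroup G) : Set G) := by
  intro x hx
  rw [← conjAct_pointwise_smul_iff]
  have hy : ofConjAct g⁻¹ * x * (ofConjAct g⁻¹)⁻¹ ∈ H := hH.conj_mem x hx _
  have hxg : toConjAct x * g = g * toConjAct (ofConjAct g⁻¹ * x * (ofConjAct g⁻¹)⁻¹) := by
    simp [toConjAct_mul, mul_assoc]
  rw [smul_smul, hxg, ← smul_smul, conjAct_pointwise_smul_eq_self (hHQ hy)]

section Action

variable {α : Type*} [Group α] [MulDistribMulAction α G]

lemma smul_sInf (a : α) (S : Set (Subgroup G)) : a • sInf S = sInf (a • S) := by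
  ext x
  simp [mem_pointwise_smul_iff_inv_smul_mem, mem_sInf, Set.mem_smul_set]

lemma smul_eq_bot_iff {a : α} {B : Subgroup G} : a • B = ⊥ ↔ B = ⊥ := by
  rw [← smul_left_cancel_iff a (x := B) (y := ⊥), smul_bot]

lemma smul_eq_or_inf_eq_bot_of_minimal {F : Set (Subgroup G)}
    (hsmul : ∀ a : α, ∀ T ∈ F, a • T ∈ F) (hinf : ∀ T ∈ F, ∀ T' ∈ F, T ⊓ T' ∈ F)
    {B : Subgroup G} (hB : Minimal (fun T => T ∈ F ∧ T ≠ ⊥) B) (a : α) :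
    a • B = B ∨ B ⊓ a • B = ⊥ := by
  have key : ∀ a : α, B ⊓ a • B ≠ ⊥ → B ≤ a • B := fun a h =>
    (hB.2 ⟨hinf _ hB.1.1 _ (hsmul a _ hB.1.1), h⟩ inf_le_left).trans inf_le_right
  refine or_iff_not_imp_right.mpr fun h => le_antisymm ?_ (key a h)
  rw [pointwise_smul_subset_iff]
  apply key a⁻¹
  rw [inf_eq_right.mpr (subset_pointwise_smul_iff.mp (key a h))]
  exact smul_eq_bot_iff.not.mpr hB.1.2

lemma smul_inf_smul_eq_bot {B : Subgroup G} (hB : ∀ a : α, a • B = B ∨ B ⊓ a • B = ⊥)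
    {a b : α} (hab : a • B ≠ b • B) : a • B ⊓ b • B = ⊥ := by
  have hinf : a • B ⊓ b • B = a • (B ⊓ (a⁻¹ * b) • B) := by
    rw [smul_inf, smul_smul, mul_inv_cancel_left]
  rcases hB (a⁻¹ * b) with h | h
  · rw [mul_smul, inv_smul_eq_iff] at h
    exact absurd h.symm hab
  · rw [hinf, h, smul_bot]

end Action

lemma finite_orbit_conjAct {Q : Subgroup G} [(normalizer (Q : Set G)).FiniteIndex] :
    (orbit (ConjAct G) Q).Finite := by
  apply Set.finite_of_ncard_ne_zero
  have hindex := index_comap_of_surjective (stabilizer (ConjAct G) Q)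
    (f := toConjAct.toMonoidHom) toConjAct.surjective
  rw [← index_stabilizer, ← hindex]
  convert (FiniteIndex.index_ne_zero : (normalizer (Q : Set G)).index ≠ 0) using 2
  ext g
  exact conjAct_pointwise_smul_iff

lemma exists_le_smul_eq_or_inf_eq_bot {H Q : Subgroup G} (hH : H.Normal) [H.FiniteIndex]
    (hHQ : H ≤ normalizer (Q : Set G)) (hQ : Q ≠ ⊥) :
    ∃ B ≤ Q, B ≠ ⊥ ∧ H ≤ normalizer (B : Set G) ∧
      ∀ g : ConjAct G, g • B = B ∨ B ⊓ g • B = ⊥ := by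
  have : (normalizer (Q : Set G)).FiniteIndex := finiteIndex_of_le hHQ
  set F := sInf '' 𝒫 (orbit (ConjAct G) Q)
  have hF : F.Finite := (finite_orbit_conjAct.finite_subsets).image _
  have hQF : Q ∈ F := ⟨{Q}, Set.singleton_subset_iff.mpr (mem_orbit_self Q), sInf_singleton⟩
  obtain ⟨B, hBQ, hB⟩ := (hF.sep (· ≠ ⊥)).isPWO.exists_le_minimal ⟨hQF, hQ⟩
  obtain ⟨S, hS, hSB⟩ := hB.1.1
  refine ⟨B, hBQ, hB.1.2, hSB ▸ le_normalizer_sInf fun T hT => ?_,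
    smul_eq_or_inf_eq_bot_of_minimal ?_ ?_ hB⟩
  · obtain ⟨g, rfl⟩ := hS hT
    exact hH.le_normalizer_smul hHQ g
  · rintro g _ ⟨S', hS', rfl⟩
    refine ⟨g • S', Set.smul_set_subset_iff.mpr fun T hT => ?_, (smul_sInf g S').symm⟩
    exact mem_orbit_of_mem_orbit g (hS' hT)
  · rintro _ ⟨S₁, h₁, rfl⟩ _ ⟨S₂, h₂, rfl⟩
    exact ⟨S₁ ∪ S₂, Set.union_subset h₁ h₂, sInf_union⟩

end Subgroup

namespace JustInfinite

variable {G : Type*} [Group G]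

lemma virtuallyAbelian_of_centralizer_ne_bot (hG : JustInfinite G) {N : Subgroup G} [N.Normal]
    (hN : N ≠ ⊥) (hC : centralizer (N : Set G) ≠ ⊥) : VirtuallyAbelian G := by
  have := hG.2.2 N ‹_› hN
  have := hG.2.2 _ inferInstance hC
  refine ⟨N ⊓ centralizer (N : Set G), inferInstance, fun a b => Subtype.ext ?_⟩
  exact mem_centralizer_iff.mp (mem_inf.mp b.2).2 _ (mem_inf.mp a.2).1

lemma virtuallyAbelian_of_finiteIndex_centralizer (hG : JustInfinite G) {A : Subgroup G}
    (hA : A ≠ ⊥) [(centralizer (A : Set G)).FiniteIndex] : VirtuallyAbelian G := by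
  have := hG.1
  exact hG.virtuallyAbelian_of_centralizer_ne_bot (ne_bot_of_finiteIndex _)
    (ne_bot_of_le_ne_bot hA (le_centralizer_iff.mp (normalCore_le _)))

lemma finiteIndex_centralizer_of_smul_le {M A B : Subgroup G} (hM : JustInfinite M)
    [M.FiniteIndex] (hBM : B ≤ M) (hB : B ≠ ⊥)
    (hconj : ∀ m ∈ M, toConjAct m • B ≤ centralizer (A : Set G)) :
    (centralizer (A : Set G)).FiniteIndex := by
  set X := (centralizer (A : Set G)).subgroupOf M
  have hBX : B.subgroupOf M ≤ X.normalCore := fun b hb m =>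
    hconj m m.2 (smul_mem_pointwise_smul _ (toConjAct (m : G)) B (mem_subgroupOf.mp hb))
  have hBM' : B.subgroupOf M ≠ ⊥ := by
    rwa [Ne, subgroupOf_eq_bot, disjoint_of_le_iff_left_eq_bot hBM]
  have := hM.2.2 _ inferInstance (ne_bot_of_le_ne_bot hBM' hBX)
  have : X.FiniteIndex := finiteIndex_of_le (normalCore_le X)
  exact finiteIndex_of_finiteIndex_subgroupOf (K := M)
lemma virtuallyAbelian_of_smul_inf_smul_eq_bot (hG : JustInfinite G)
    (hmax : ∀ M : Subgroup G, IsCoatom M → M.FiniteIndex → JustInfinite M)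
    {H B : Subgroup G} (hH : H.Normal) [H.FiniteIndex] (hBH : B ≤ H)
    (hHB : H ≤ normalizer (B : Set G)) (hB : B ≠ ⊥) (hBfi : ¬ B.FiniteIndex)
    (hdisj : ∀ a b : ConjAct G, a • B ≠ b • B → a • B ⊓ b • B = ⊥) : VirtuallyAbelian G := by
  have : (normalizer (B : Set G)).FiniteIndex := finiteIndex_of_le hHB
  obtain ⟨M, hNM, hM⟩ := exists_le_isCoatom_of_finiteIndex fun h =>
    hBfi (hG.2.2 B (normalizer_eq_top_iff.mp h) hB)
  have : M.FiniteIndex := finiteIndex_of_le hNM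
  obtain ⟨g, hgM⟩ : ∃ g, g ∉ M := by
    by_contra! h
    exact hM.1 ((eq_top_iff' M).mpr h)
  have hsmul_le : ∀ a : ConjAct G, a • B ≤ H := fun a =>
    hH.conjAct a ▸ pointwise_smul_le_pointwise_smul_iff.mpr hBH
  have hconj : ∀ m ∈ M,
      toConjAct m • B ≤ centralizer ((toConjAct g • B : Subgroup G) : Set G) := by
    intro m hm
    have hne : toConjAct m • B ≠ toConjAct g • B := by
      intro h
      rw [← inv_smul_eq_iff, smul_smul, ← toConjAct_inv, ← toConjAct_mul,
        conjAct_pointwise_smul_iff] at h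
      exact hgM (inv_mem_iff.mp ((mul_mem_cancel_right hm).mp (hNM h)))
    exact le_centralizer_of_inf_eq_bot ((hsmul_le _).trans (hH.le_normalizer_smul hHB _))
      ((hsmul_le _).trans (hH.le_normalizer_smul hHB _)) (hdisj _ _ hne)
  have := finiteIndex_centralizer_of_smul_le (hmax M hM ‹_›) (le_normalizer.trans hNM) hB hconj
  exact hG.virtuallyAbelian_of_finiteIndex_centralizer (A := toConjAct g • B)
    (smul_eq_bot_iff.not.mpr hB)

lemma finiteIndex_of_le_normalizer (hG : JustInfinite G) (hnva : ¬ VirtuallyAbelian G)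
    (hmax : ∀ M : Subgroup G, IsCoatom M → M.FiniteIndex → JustInfinite M)
    {K P : Subgroup G} [K.FiniteIndex] (hKP : K ≤ normalizer (P : Set G))
    (hP : P ≠ ⊥) : P.FiniteIndex := by
  by_contra hPfi
  have hHK : K.normalCore ≤ K := normalCore_le K
  have hQ : P ⊓ K.normalCore ≠ ⊥ := fun h => by
    have : (centralizer (P : Set G)).FiniteIndex := finiteIndex_of_le (le_centralizer_iff.mp
      (le_centralizer_of_inf_eq_bot le_normalizer_of_normal (hHK.trans hKP) h))
    exact hnva (hG.virtuallyAbelian_of_finiteIndex_centralizer hP)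
  obtain ⟨B, hBQ, hB, hHB, hdich⟩ := exists_le_smul_eq_or_inf_eq_bot (normalCore_normal K)
    ((le_inf (hHK.trans hKP) le_normalizer).trans inf_normalizer_le_normalizer_inf) hQ
  exact hnva (hG.virtuallyAbelian_of_smul_inf_smul_eq_bot hmax (normalCore_normal K)
    (hBQ.trans inf_le_right) hHB hB (fun h => hPfi (finiteIndex_of_le (hBQ.trans inf_le_left)))
    fun _ _ => smul_inf_smul_eq_bot hdich)

end JustInfinite

/-- A just infinite group that is not virtually abelian is hereditarily just
infinite iff every maximal subgroup of finite index is just infinite. -/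
theorem hereditarilyJustInfinite_iff_maximal {G : Type*} [Group G]
    (hji : JustInfinite G) (hnva : ¬ VirtuallyAbelian G) :
    (∀ K : Subgroup G, K.FiniteIndex → JustInfinite K) ↔
      ∀ M : Subgroup G, IsCoatom M → M.FiniteIndex → JustInfinite M := by
  refine ⟨fun h M _ hM => h M hM, fun hmax K hK => ?_⟩
  have := hji.1
  refine ⟨K.infinite_of_finiteIndex, hji.2.1.subgroup K, fun P hP hP0 => ?_⟩
  have hPK : (P.map K.subtype).subgroupOf K = P :=
    comap_map_eq_self_of_injective K.subtype_injective P
  have : ((P.map K.subtype).subgroupOf K).Normal := by rwa [hPK]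
  have := hji.finiteIndex_of_le_normalizer hnva hmax
    (le_normalizer_of_normal_subgroupOf (map_subtype_le P))
    ((map_eq_bot_iff_of_injective P K.subtype_injective).not.mpr hP0)
  exact hPK ▸ inferInstance
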